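/- arXiv:1805.09685 — 5 statements merged into one kernel-verified Lean document; each statement's English description precedes it below -/
import Mathlib

section
/- Let ω ∈ W_0 satisfy γ(ω) > 1 and let h : [0,∞) → [0,∞) be any function with ω(t) = o(h(t)) as t → ∞. Then for every γ with 0 < γ < γ(ω) there exists a function σ ∈ W_0 such that ω(t) = o(σ(t)) as t → ∞, σ(t) = o(h(t)) as t → ∞, and γ(σ) > γ. -/
open Filter MeasureTheory Set Asymptotics

noncomputable section

/-- A *weight function*: continuous and nondecreasing on `[0,∞)`, vanishing at `0`,
and tending to `+∞` at `+∞`. -/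
structure IsWeightFunction (ω : ℝ → ℝ) : Prop where
  continuousOn : ContinuousOn ω (Set.Ici 0)
  monotoneOn : MonotoneOn ω (Set.Ici 0)
  map_zero : ω 0 = 0
  tendsto_atTop : Filter.Tendsto ω Filter.atTop Filter.atTop

/-- Condition `(P_{ω,γ})`: there is `K > 1` with `limsup_{t→∞} ω(K^γ t)/ω(t) < K`,
expressed through an eventual bound by some `c < K`. -/
def Pcond (ω : ℝ → ℝ) (γ : ℝ) : Prop :=
  ∃ K : ℝ, 1 < K ∧ ∃ c : ℝ, c < K ∧ ∀ᶠ t : ℝ in Filter.atTop, ω (K ^ γ * t) / ω t ≤ c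

/-- The growth index `γ(ω) ∈ [0,+∞]`, with `sup ∅ = 0`. -/
noncomputable def gammaIndex (ω : ℝ → ℝ) : ENNReal :=
  ⨆ γ ∈ {γ : ℝ | 0 < γ ∧ Pcond ω γ}, ENNReal.ofReal γ

/-- Condition `(ω₁)`. -/
def Omega1 (ω : ℝ → ℝ) : Prop :=
  ∃ L : ℝ, 1 ≤ L ∧ ∀ t : ℝ, 0 ≤ t → ω (2 * t) ≤ L * (ω t + 1)

/-- Condition `(ω₃)`: `log t = o(ω t)` as `t → ∞`. -/
def Omega3 (ω : ℝ → ℝ) : Prop :=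
  (fun t : ℝ => Real.log t) =o[Filter.atTop] ω

/-- Condition `(ω₄)`: `t ↦ ω (exp t)` is convex on `ℝ`. -/
def Omega4 (ω : ℝ → ℝ) : Prop :=
  ConvexOn ℝ Set.univ (fun t : ℝ => ω (Real.exp t))

/-- Condition `(ω₅)`: `ω t = o(t)` as `t → ∞`. -/
def Omega5 (ω : ℝ → ℝ) : Prop :=
  ω =o[Filter.atTop] (fun t : ℝ => t)

/-- Condition `(ω_snq)`. -/
def OmegaSnq (ω : ℝ → ℝ) : Prop :=
  ∃ C : ℝ, 0 < C ∧ ∀ y : ℝ, 0 < y →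
    (∫⁻ t in Set.Ioi (1:ℝ), ENNReal.ofReal (ω (y * t) / t ^ 2)) ≤
      ENNReal.ofReal (C * (ω y + 1))

/-- `ω ∈ W₀`: normalized weight function with `(ω₃)` and `(ω₄)`. -/
def InW0 (ω : ℝ → ℝ) : Prop :=
  IsWeightFunction ω ∧ (∀ t ∈ Set.Icc (0:ℝ) 1, ω t = 0) ∧ Omega3 ω ∧ Omega4 ω

/-- The Legendre–Fenchel–Young conjugate `φ*_ω(x) = sup {x y − ω(e^y) : y ≥ 0}`. -/
noncomputable def phiStar (ω : ℝ → ℝ) (x : ℝ) : ℝ :=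
  sSup ((fun y : ℝ => x * y - ω (Real.exp y)) '' Set.Ici 0)

/-- The associated weight matrix `W^l_j = exp((1/l) φ*_ω(l j))`. -/
noncomputable def Wseq (ω : ℝ → ℝ) (l : ℝ) (j : ℕ) : ℝ :=
  Real.exp ((1 / l) * phiStar ω (l * (j : ℝ)))

/-- `w^l_j = W^l_j / j!`. -/
noncomputable def wseq (ω : ℝ → ℝ) (l : ℝ) (j : ℕ) : ℝ :=
  Wseq ω l j / (Nat.factorial j : ℝ)

/-- `h_M(t) = inf_{k ∈ ℕ} M_k t^k`. -/
noncomputable def hFun (M : ℕ → ℝ) (t : ℝ) : ℝ :=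
  ⨅ k : ℕ, M k * t ^ k

/-- The associated function `ω_M(t) = sup_p log (t^p / M_p)` for `t > 0`, `ω_M(0) = 0`. -/
noncomputable def assocWeight (M : ℕ → ℝ) (t : ℝ) : ℝ :=
  if t ≤ 0 then 0 else ⨆ p : ℕ, Real.log (t ^ p / M p)

/-- The upper Legendre conjugate `ω⋆(s) = sup_{t ≥ 0} (ω(t) − s t)`. -/
noncomputable def upperConj (ω : ℝ → ℝ) (s : ℝ) : ℝ :=
  sSup ((fun t : ℝ => ω t - s * t) '' Set.Ici 0)

/-- `(ω⋆)^ι(t) = ω⋆(1/t)` for `t > 0`, with value `0` at `t = 0`. -/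
noncomputable def upperConjIota (ω : ℝ → ℝ) (t : ℝ) : ℝ :=
  if t = 0 then 0 else upperConj ω (1 / t)

/-- The lower Legendre conjugate `(ω^ι)_⋆(t) = inf_{s > 0} (ω(1/s) + t s)`. -/
noncomputable def lowerConjIota (ω : ℝ → ℝ) (t : ℝ) : ℝ :=
  sInf ((fun s : ℝ => ω (1 / s) + t * s) '' Set.Ioi 0)

/-- The unbounded sector `S_γ ⊆ ℂ` of opening `γ π` bisected by direction `0`
(for `0 < γ < 2` it lies in `ℂ`). -/
def sector (γ : ℝ) : Set ℂ :=
  {z : ℂ | z ≠ 0 ∧ |Complex.arg z| < γ * Real.pi / 2}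

/-- `M ∈ LC`: positive, normalized, log-convex, `(M_p)^{1/p} → ∞`. -/
def LCseq (M : ℕ → ℝ) : Prop :=
  (∀ p, 0 < M p) ∧ M 0 = 1 ∧ M 0 ≤ M 1 ∧
  (∀ j : ℕ, 1 ≤ j → M j ^ 2 ≤ M (j - 1) * M (j + 1)) ∧
  Filter.Tendsto (fun p : ℕ => M p ^ ((1 : ℝ) / (p : ℝ))) Filter.atTop Filter.atTop

/-- The partial derivative `∂_i` of a function on `ℝ^d`. -/
noncomputable def partialDeriv {d : ℕ} (i : Fin d)
    (f : EuclideanSpace ℝ (Fin d) → ℂ) : EuclideanSpace ℝ (Fin d) → ℂ :=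
  fun x => fderiv ℝ f x (EuclideanSpace.single i 1)

/-- The iterated partial derivative `∂^j` for a multiindex `j ∈ ℕ^d`. -/
noncomputable def multiDeriv {d : ℕ} (j : Fin d → ℕ)
    (f : EuclideanSpace ℝ (Fin d) → ℂ) : EuclideanSpace ℝ (Fin d) → ℂ :=
  (List.finRange d).foldr (fun i g => (partialDeriv i)^[j i] g) f

end

/-!
The weight is `σ = φ ∘ ω` with `φ v = ⨆ n, (n + 1) (v - aₙ)`, an increasing convex function
with `φ v / v → ∞`, so `σ ∈ W₀` and `ω = o(σ)`. The points `aₙ` are chosen sparse: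
`aₙ₊₁ ≥ 2 C aₙ` gives `φ (C v) ≤ 4 C φ v`, so if `ω (K ^ γ t) ≤ C ω t` with `4 C < K` then `σ`
satisfies `(P_{σ,γ})`; such `K, C` exist for every `γ < γ(ω)` by iterating `(P_{ω,γ'})`.
They are also chosen large: `φ v ≤ (n + 1) v` as long as `v ≤ aₙ₊₁`, and beyond `aₙ` the
function `ω` is already below `h / (n + 1)²`, whence `σ = o(h)`.
-/

noncomputable def lineSup (a : ℕ → ℝ) (v : ℝ) : ℝ := ⨆ n : ℕ, ((n : ℝ) + 1) * (v - a n)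

section LineSup

variable {a : ℕ → ℝ}

lemma bddAbove_range_lineSup (han : ∀ n : ℕ, (n : ℝ) ≤ a n) (v : ℝ) :
    BddAbove (range fun n : ℕ => ((n : ℝ) + 1) * (v - a n)) := by
  refine ⟨(v + 1) ^ 2, ?_⟩
  rintro _ ⟨n, rfl⟩
  have hn : (0 : ℝ) ≤ n := n.cast_nonneg
  nlinarith [han n, sq_nonneg (2 * (n : ℝ) + 1 - v)]

lemma le_lineSup (han : ∀ n : ℕ, (n : ℝ) ≤ a n) (v : ℝ) (n : ℕ) :
    ((n : ℝ) + 1) * (v - a n) ≤ lineSup a v :=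
  le_ciSup (bddAbove_range_lineSup han v) n

lemma self_le_lineSup (ha0 : a 0 = 0) (han : ∀ n : ℕ, (n : ℝ) ≤ a n) (v : ℝ) :
    v ≤ lineSup a v := by
  simpa [ha0] using le_lineSup han v 0

lemma lineSup_zero (ha0 : a 0 = 0) (han : ∀ n : ℕ, (n : ℝ) ≤ a n) : lineSup a 0 = 0 := by
  refine le_antisymm (ciSup_le fun n => ?_) (self_le_lineSup ha0 han 0)
  have : (0 : ℝ) ≤ a n := n.cast_nonneg.trans (han n)
  exact mul_nonpos_of_nonneg_of_nonpos (by positivity) (by linarith)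

lemma monotone_lineSup (han : ∀ n : ℕ, (n : ℝ) ≤ a n) : Monotone (lineSup a) :=
  fun v w hvw => ciSup_le fun n =>
    (mul_le_mul_of_nonneg_left (by linarith) (by positivity)).trans (le_lineSup han w n)

lemma convexOn_lineSup (han : ∀ n : ℕ, (n : ℝ) ≤ a n) : ConvexOn ℝ univ (lineSup a) := by
  refine ⟨convex_univ, fun v _ w _ p q hp hq hpq => ciSup_le fun n => ?_⟩
  calc ((n : ℝ) + 1) * (p • v + q • w - a n)
      = p * (((n : ℝ) + 1) * (v - a n)) + q * (((n : ℝ) + 1) * (w - a n)) := by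
        simp only [smul_eq_mul]; linear_combination ((n : ℝ) + 1) * a n * hpq
    _ ≤ p • lineSup a v + q • lineSup a w := by
        simp only [smul_eq_mul]; gcongr <;> exact le_lineSup han _ n

lemma continuous_lineSup (han : ∀ n : ℕ, (n : ℝ) ≤ a n) : Continuous (lineSup a) :=
  continuousOn_univ.1 ((convexOn_lineSup han).continuousOn isOpen_univ)

lemma isLittleO_lineSup (han : ∀ n : ℕ, (n : ℝ) ≤ a n) :
    (fun v => v) =o[atTop] lineSup a := by
  refine isLittleO_iff.2 fun ε hε => ?_
  obtain ⟨n, hn⟩ := exists_nat_ge (2 / ε)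
  filter_upwards [eventually_ge_atTop (max 0 (2 * a n))] with v hv
  have hv0 : 0 ≤ v := (le_max_left _ _).trans hv
  have hva : 2 * a n ≤ v := (le_max_right _ _).trans hv
  have hφ : ((n : ℝ) + 1) * (v - a n) ≤ lineSup a v := le_lineSup han v n
  have ha : (0 : ℝ) ≤ a n := n.cast_nonneg.trans (han n)
  have hφ0 : 0 ≤ lineSup a v := (mul_nonneg (by positivity) (by linarith)).trans hφ
  rw [Real.norm_of_nonneg hv0, Real.norm_of_nonneg hφ0]
  calc v = ε * (2 / ε * (v / 2)) := by field_simp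
    _ ≤ ε * (((n : ℝ) + 1) * (v - a n)) := by gcongr <;> linarith
    _ ≤ ε * lineSup a v := by gcongr

lemma lineSup_mul_le (ha0 : a 0 = 0) (han : ∀ n : ℕ, (n : ℝ) ≤ a n) {C v : ℝ} (hC : 1 ≤ C)
    (hstep : ∀ n, 2 * C * a n ≤ a (n + 1)) (hv : 0 < v) :
    lineSup a (C * v) ≤ 4 * C * lineSup a v := by
  have hφv : v ≤ lineSup a v := self_le_lineSup ha0 han v
  refine ciSup_le fun n => ?_
  rcases le_or_gt (C * v) (a n) with h | h
  · exact (mul_nonpos_of_nonneg_of_nonpos (by positivity) (by linarith)).trans (by nlinarith)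
  cases n with
  | zero => simp only [Nat.cast_zero, ha0]; nlinarith
  | succ j =>
    have haj : (0 : ℝ) ≤ a (j + 1) := (Nat.cast_nonneg _).trans (han _)
    -- sparseness: `a j < v / 2`, so the `j`-th line already sees half of `v`
    have hj : 2 * a j < v := by nlinarith [hstep j]
    calc ((↑(j + 1) : ℝ) + 1) * (C * v - a (j + 1)) ≤ 2 * ((j : ℝ) + 1) * (C * v) := by
          push_cast; nlinarith [j.cast_nonneg (α := ℝ)]
      _ = 4 * C * (((j : ℝ) + 1) * (v / 2)) := by ring
      _ ≤ 4 * C * (((j : ℝ) + 1) * (v - a j)) := by gcongr; linarith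
      _ ≤ 4 * C * lineSup a v := by gcongr; exact le_lineSup han v j

end LineSup

lemma InW0.comp_lineSup {ω : ℝ → ℝ} {a : ℕ → ℝ} (hω : InW0 ω) (ha0 : a 0 = 0)
    (han : ∀ n : ℕ, (n : ℝ) ≤ a n) : InW0 (fun t => lineSup a (ω t)) := by
  obtain ⟨hW, hnorm, h3, h4⟩ := hω
  have hmono := monotone_lineSup han
  refine ⟨⟨(continuous_lineSup han).comp_continuousOn hW.continuousOn,
      hmono.comp_monotoneOn hW.monotoneOn, by simp [hW.map_zero, lineSup_zero ha0 han],
      tendsto_atTop_mono (fun t => self_le_lineSup ha0 han _) hW.tendsto_atTop⟩,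
    fun t ht => by simp [hnorm t ht, lineSup_zero ha0 han],
    h3.trans_isBigO ((isLittleO_lineSup han).comp_tendsto hW.tendsto_atTop).isBigO,
    convex_univ, fun x _ y _ p q hp hq hpq => ?_⟩
  calc lineSup a (ω (Real.exp (p • x + q • y)))
      ≤ lineSup a (p • ω (Real.exp x) + q • ω (Real.exp y)) :=
        hmono (h4.2 (mem_univ x) (mem_univ y) hp hq hpq)
    _ ≤ p • lineSup a (ω (Real.exp x)) + q • lineSup a (ω (Real.exp y)) :=
        (convexOn_lineSup han).2 (mem_univ _) (mem_univ _) hp hq hpq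

lemma MonotoneOn.exists_forall_le_apply_imp {f : ℝ → ℝ} (hf : MonotoneOn f (Ici 0))
    {p : ℝ → Prop} (hp : ∀ᶠ t in atTop, p t) : ∃ b, ∀ t, 0 ≤ t → b ≤ f t → p t := by
  obtain ⟨G, hG⟩ := eventually_atTop.1 hp
  refine ⟨f (max G 0) + 1, fun t ht hbt => hG t ?_⟩
  by_contra! htG
  have := hf (mem_Ici.2 ht) (mem_Ici.2 (le_max_right G 0)) (htG.le.trans (le_max_left G 0))
  linarith

lemma exists_seq_dominating (b : ℕ → ℝ) (C : ℝ) :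
    ∃ a : ℕ → ℝ, a 0 = 0 ∧ (∀ n : ℕ, (n : ℝ) ≤ a n) ∧ (∀ n, 2 * C * a n ≤ a (n + 1)) ∧
      ∀ n, 1 ≤ n → b n ≤ a n := by
  let a : ℕ → ℝ := fun n =>
    Nat.rec 0 (fun k ak => max (max ((k : ℝ) + 1) (2 * C * ak)) (b (k + 1))) n
  have ha : ∀ n, a (n + 1) = max (max ((n : ℝ) + 1) (2 * C * a n)) (b (n + 1)) := fun n => rfl
  refine ⟨a, rfl, fun n => ?_, fun n => ?_, fun n hn => ?_⟩
  · cases n with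
    | zero => simp [a]
    | succ n => rw [ha]; push_cast; exact le_max_of_le_left (le_max_left _ _)
  · rw [ha]; exact le_max_of_le_left (le_max_right _ _)
  · obtain ⟨n, rfl⟩ := Nat.exists_eq_add_of_le' hn
    rw [ha]; exact le_max_right _ _

lemma isLittleO_lineSup_comp {ω h : ℝ → ℝ} {a : ℕ → ℝ} (han : ∀ n : ℕ, (n : ℝ) ≤ a n)
    (hωtop : Tendsto ω atTop atTop)
    (hah : ∀ k : ℕ, 1 ≤ k → ∀ t, 0 ≤ t → a k ≤ ω t → ((k : ℝ) + 1) ^ 2 * ‖ω t‖ ≤ ‖h t‖) :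
    (fun t => lineSup a (ω t)) =o[atTop] h := by
  refine isLittleO_iff.2 fun ε hε => ?_
  obtain ⟨N, hN⟩ := exists_nat_one_div_lt hε
  filter_upwards [eventually_ge_atTop 0, hωtop.eventually_ge_atTop (a (N + 1))] with t ht hat
  have ha : ∀ n, 0 ≤ a n := fun n => n.cast_nonneg.trans (han n)
  have hωt : 0 ≤ ω t := (ha _).trans hat
  have hσt : 0 ≤ lineSup a (ω t) :=
    (mul_nonneg (by positivity) (by linarith)).trans (le_lineSup han _ (N + 1))
  rw [Real.norm_of_nonneg hσt]
  refine ciSup_le fun j => ?_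
  rcases lt_or_ge (ω t) (a j) with hj | hj
  · exact (mul_nonpos_of_nonneg_of_nonpos (by positivity) (by linarith)).trans (by positivity)
  -- compare with the level `k = max j (N + 1)`, which `ω t` has already passed
  have hak : a (max j (N + 1)) ≤ ω t := by
    rcases max_choice j (N + 1) with hk | hk <;> rw [hk] <;> assumption
  set k := max j (N + 1)
  have hbound := hah k (le_max_of_le_right N.succ_pos) t ht hak
  rw [Real.norm_of_nonneg hωt] at hbound
  have hjk : (j : ℝ) ≤ k := by exact_mod_cast le_max_left j (N + 1)
  have hNk : (N : ℝ) + 1 ≤ k := by exact_mod_cast le_max_right j (N + 1)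
  calc ((j : ℝ) + 1) * (ω t - a j) ≤ ((k : ℝ) + 1) * ω t := by nlinarith [ha j]
    _ ≤ 1 / ((k : ℝ) + 1) * ‖h t‖ := by
        rw [div_mul_eq_mul_div, one_mul, le_div_iff₀ (by positivity)]; nlinarith
    _ ≤ ε * ‖h t‖ := by
        gcongr
        exact (one_div_le_one_div_of_le (by positivity) (by linarith)).trans hN.le

lemma eventually_le_pow_mul {f : ℝ → ℝ} {r c : ℝ} (hr : 0 < r) (hc : 0 ≤ c)
    (h : ∀ᶠ t in atTop, f (r * t) ≤ c * f t) (n : ℕ) :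
    ∀ᶠ t in atTop, f (r ^ n * t) ≤ c ^ n * f t := by
  induction n with
  | zero => simp
  | succ n ih =>
    filter_upwards [h, (tendsto_id.const_mul_atTop hr).eventually ih] with t h1 h2
    calc f (r ^ (n + 1) * t) = f (r ^ n * (r * t)) := by ring_nf
      _ ≤ c ^ n * f (r * t) := h2
      _ ≤ c ^ n * (c * f t) := by gcongr
      _ = c ^ (n + 1) * f t := by ring

lemma Pcond.exists_eventually_le {f : ℝ → ℝ} {γ : ℝ} (hP : Pcond f γ)
    (hf : ∀ᶠ t in atTop, 0 < f t) :
    ∃ K c : ℝ, 1 ≤ c ∧ c < K ∧ ∀ᶠ t in atTop, f (K ^ γ * t) ≤ c * f t := by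
  obtain ⟨K, hK, c, hcK, hev⟩ := hP
  refine ⟨K, max c 1, le_max_right _ _, max_lt hcK hK, ?_⟩
  filter_upwards [hev, hf] with t h1 h2
  rw [div_le_iff₀ h2] at h1
  exact h1.trans (by gcongr; exact le_max_left _ _)

/-- The witnesses are `K ^ (m γ' / γ)` and `c ^ m` for `m` large, where `K, c` come from
`(P_{f,γ'})`; this uses `γ < γ'`, since `(K ^ (γ' / γ) / c) ^ m → ∞`. -/
lemma Pcond.exists_eventually_le_of_lt {f : ℝ → ℝ} {γ γ' : ℝ} (hP : Pcond f γ')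
    (hf : ∀ᶠ t in atTop, 0 < f t) (hγ : 0 < γ) (hγγ' : γ < γ') (M : ℝ) :
    ∃ K C : ℝ, 1 ≤ C ∧ M * C < K ∧ ∀ᶠ t in atTop, f (K ^ γ * t) ≤ C * f t := by
  obtain ⟨K, c, hc, hcK, hev⟩ := hP.exists_eventually_le hf
  have hK : 0 < K := by linarith
  set r := K ^ (γ' / γ)
  have hKr : K ≤ r := Real.self_le_rpow_of_one_le (by linarith) ((one_le_div hγ).2 hγγ'.le)
  obtain ⟨m, hm⟩ := ((tendsto_pow_atTop_atTop_of_one_lt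
    ((one_lt_div (by linarith)).2 (hcK.trans_le hKr))).eventually_gt_atTop M).exists
  refine ⟨r ^ m, c ^ m, one_le_pow₀ hc, ?_, ?_⟩
  · rwa [div_pow, lt_div_iff₀ (by positivity)] at hm
  · have hrγ : (r ^ m) ^ γ = (K ^ γ') ^ m := by
      rw [← Real.rpow_pow_comm (by positivity), ← Real.rpow_mul hK.le,
        div_mul_cancel₀ _ hγ.ne']
    rw [hrγ]
    exact eventually_le_pow_mul (by positivity) (by positivity) hev m

lemma pcond_lineSup_comp {ω : ℝ → ℝ} {a : ℕ → ℝ} (ha0 : a 0 = 0)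
    (han : ∀ n : ℕ, (n : ℝ) ≤ a n) {C K γ : ℝ} (hC : 1 ≤ C)
    (hstep : ∀ n, 2 * C * a n ≤ a (n + 1)) (hCK : 4 * C < K) (hω : ∀ᶠ t in atTop, 0 < ω t)
    (hωK : ∀ᶠ t in atTop, ω (K ^ γ * t) ≤ C * ω t) :
    Pcond (fun t => lineSup a (ω t)) γ := by
  refine ⟨K, by linarith, 4 * C, hCK, ?_⟩
  filter_upwards [hω, hωK] with t hpos hle
  rw [div_le_iff₀ (hpos.trans_le (self_le_lineSup ha0 han _))]
  exact (monotone_lineSup han hle).trans (lineSup_mul_le ha0 han hC hstep hpos)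

lemma ofReal_le_gammaIndex {f : ℝ → ℝ} {γ : ℝ} (hγ : 0 < γ) (hP : Pcond f γ) :
    ENNReal.ofReal γ ≤ gammaIndex f :=
  le_iSup₂ (f := fun x (_ : x ∈ {g : ℝ | 0 < g ∧ Pcond f g}) => ENNReal.ofReal x) γ ⟨hγ, hP⟩

lemma exists_pcond_of_ofReal_lt_gammaIndex {f : ℝ → ℝ} {γ : ℝ}
    (h : ENNReal.ofReal γ < gammaIndex f) : ∃ γ', γ < γ' ∧ 0 < γ' ∧ Pcond f γ' := by
  simp only [gammaIndex, lt_iSup_iff] at h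
  obtain ⟨γ', ⟨hpos, hP⟩, hlt⟩ := h
  exact ⟨γ', (ENNReal.ofReal_lt_ofReal_iff hpos).1 hlt, hpos, hP⟩

theorem InW0.exists_isLittleO_pcond {ω h : ℝ → ℝ} (hω : InW0 ω) (hsmall : ω =o[atTop] h)
    {γ γ' : ℝ} (hP : Pcond ω γ') (hγ : 0 < γ) (hγγ' : γ < γ') :
    ∃ σ, InW0 σ ∧ ω =o[atTop] σ ∧ σ =o[atTop] h ∧ Pcond σ γ := by
  have hωtop := hω.1.tendsto_atTop
  obtain ⟨K, C, hC, hCK, hK⟩ :=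
    hP.exists_eventually_le_of_lt (hωtop.eventually_gt_atTop 0) hγ hγγ' 4
  have hb : ∀ k : ℕ, ∃ b, ∀ t, 0 ≤ t → b ≤ ω t → ((k : ℝ) + 1) ^ 2 * ‖ω t‖ ≤ ‖h t‖ :=
    fun k => hω.1.monotoneOn.exists_forall_le_apply_imp <|
      (hsmall.def (by positivity : 0 < (((k : ℝ) + 1) ^ 2)⁻¹)).mono fun t ht => by
        rwa [← le_div_iff₀' (by positivity), div_eq_inv_mul]
  choose b hb using hb
  obtain ⟨a, ha0, han, hstep, hab⟩ := exists_seq_dominating b C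
  exact ⟨_, hω.comp_lineSup ha0 han, (isLittleO_lineSup han).comp_tendsto hωtop,
    isLittleO_lineSup_comp han hωtop fun k hk t ht hat => hb k t ht ((hab k hk).trans hat),
    pcond_lineSup_comp ha0 han hC hstep hCK (hωtop.eventually_gt_atTop 0) hK⟩

theorem weight_between_omega_and_h_general
    (ω : ℝ → ℝ) (hω : InW0 ω)
    (h : ℝ → ℝ)
    (hsmall : ω =o[Filter.atTop] h)
    (γ : ℝ) (hγ : ENNReal.ofReal γ < gammaIndex ω) :
    ∃ σ : ℝ → ℝ, InW0 σ ∧ ω =o[Filter.atTop] σ ∧ σ =o[Filter.atTop] h ∧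
      ENNReal.ofReal γ < gammaIndex σ := by
  obtain ⟨γ', hγγ', hγ'0, hP⟩ := exists_pcond_of_ofReal_lt_gammaIndex hγ
  obtain ⟨γ'', hγ'', hγ''γ'⟩ := exists_between (max_lt hγγ' hγ'0)
  have hγ''0 : 0 < γ'' := (le_max_right γ 0).trans_lt hγ''
  obtain ⟨σ, hσ, hωσ, hσh, hPσ⟩ := hω.exists_isLittleO_pcond hsmall hP hγ''0 hγ''γ'
  refine ⟨σ, hσ, hωσ, hσh, ?_⟩
  calc ENNReal.ofReal γ < ENNReal.ofReal γ'' :=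
        (ENNReal.ofReal_lt_ofReal_iff hγ''0).2 ((le_max_left γ 0).trans_lt hγ'')
    _ ≤ gammaIndex σ := ofReal_le_gammaIndex hγ''0 hPσ

/-- Lemma 7.1: interpolation of a weight `σ ∈ W₀` between `ω` and
`h`, with prescribed lower bound on the growth index. -/
theorem weight_between_omega_and_h
    (ω : ℝ → ℝ) (hω : InW0 ω) (hγω : 1 < gammaIndex ω)
    (h : ℝ → ℝ) (hpos : ∀ t : ℝ, 0 ≤ t → 0 ≤ h t)
    (hsmall : ω =o[Filter.atTop] h)
    (γ : ℝ) (hγ0 : 0 < γ) (hγ : ENNReal.ofReal γ < gammaIndex ω) :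
    ∃ σ : ℝ → ℝ, InW0 σ ∧ ω =o[Filter.atTop] σ ∧ σ =o[Filter.atTop] h ∧
      ENNReal.ofReal γ < gammaIndex σ :=
  weight_between_omega_and_h_general ω hω h hsmall γ hγ
end

section
/- Let ω be a weight function with (ω_5). Then γ((ω⋆)^ι) > 1 if and only if there exists C ≥ 1 such that for all y > 0: ∫₀¹ ω⋆(ty) dt ≤ C(ω⋆(y) + 1) (equivalently, ∫₀¹ −ω⋆(ty) dt ≥ −C(ω⋆(y)+1)). -/
open Filter MeasureTheory Set Asymptotics

/-!
Write `σ = ω⋆`: it is nonnegative, antitone on `(0, ∞)` and tends to `∞` at `0⁺`, so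
`γ((ω⋆)^ι) > 1` amounts to `σ(s / l) ≤ c σ(s)` near `0` for some `0 ≤ c < l` (with `l = K^γ ≥ K`).
Given this, cutting `(0, 1]` into the blocks `(l^{-n-1}, l^{-n}]` bounds `∫₀¹ σ(ty) dt` by a
geometric series of ratio `c / l`. Conversely, if the mean `A(y) = ∫₀¹ σ(ty) dt` is at most
`D σ(y)`, then `A(y/2) + σ(y) ≤ 2 A(y)` gives `A(y/2) ≤ (2 - 1/D) A(y)`, hence
`σ(y / 2ⁿ) ≤ D (2 - 1/D)ⁿ σ(y)`. Since `2 - 1/D < 2`, this is `(P_{ω⋆^ι, γ})` with `K = μⁿ` and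
`γ = log_μ 2 > 1`, for any `μ ∈ (2 - 1/D, 2)` and `n` large.
-/

open scoped ENNReal Topology

theorem one_lt_gammaIndex_iff (g : ℝ → ℝ) : 1 < gammaIndex g ↔ ∃ γ, 1 < γ ∧ Pcond g γ := by
  simp only [gammaIndex, lt_iSup_iff, exists_prop, ENNReal.one_lt_ofReal]
  constructor
  · rintro ⟨γ, ⟨-, hP⟩, hγ⟩
    exact ⟨γ, hγ, hP⟩
  · rintro ⟨γ, hγ, hP⟩
    exact ⟨γ, ⟨one_pos.trans hγ, hP⟩, hγ⟩

theorem Pcond.exists_eventually_le_mul {g : ℝ → ℝ} {γ : ℝ} (h : Pcond g γ) (hγ : 1 ≤ γ)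
    (hg : ∀ᶠ t in atTop, 0 < g t) :
    ∃ l c : ℝ, 1 < l ∧ 0 ≤ c ∧ c < l ∧ ∀ᶠ t in atTop, g (l * t) ≤ c * g t := by
  obtain ⟨K, hK, c, hcK, hev⟩ := h
  have hKl : K ≤ K ^ γ := by simpa using Real.rpow_le_rpow_of_exponent_le hK.le hγ
  refine ⟨K ^ γ, max c 0, hK.trans_le hKl, le_max_right _ _,
    max_lt (hcK.trans_le hKl) (by linarith), ?_⟩
  filter_upwards [hev, hg] with t ht hgt
  rw [div_le_iff₀ hgt] at ht
  exact ht.trans (mul_le_mul_of_nonneg_right (le_max_left _ _) hgt.le)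

theorem exists_one_lt_pcond_of_le_pow {g : ℝ → ℝ} {A θ : ℝ} (hθ₀ : 0 ≤ θ) (hθ : θ < 2)
    (hg : ∀ᶠ t in atTop, 0 < g t)
    (h : ∀ n : ℕ, ∀ᶠ t in atTop, g (2 ^ n * t) ≤ A * θ ^ n * g t) :
    ∃ γ, 1 < γ ∧ Pcond g γ := by
  obtain ⟨μ, hθμ, hμ1, hμ2⟩ : ∃ μ, θ < μ ∧ 1 < μ ∧ μ < 2 :=
    ⟨(max θ 1 + 2) / 2, by linarith [le_max_left θ 1], by linarith [le_max_right θ 1],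
      by linarith [max_lt hθ one_lt_two]⟩
  have hμ0 : 0 < μ := one_pos.trans hμ1
  have hlim : Tendsto (fun n : ℕ => A * (θ / μ) ^ n) atTop (𝓝 0) := by
    simpa using (tendsto_pow_atTop_nhds_zero_of_lt_one (div_nonneg hθ₀ hμ0.le)
      ((div_lt_one hμ0).2 hθμ)).const_mul A
  obtain ⟨n, hn, hn1⟩ :=
    ((hlim.eventually (gt_mem_nhds one_pos)).and (eventually_ge_atTop 1)).exists
  have hc : A * θ ^ n < μ ^ n := by
    rwa [div_pow, ← mul_div_assoc, div_lt_one (by positivity)] at hn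
  have hK : (μ ^ n) ^ Real.logb μ 2 = 2 ^ n := by
    rw [← Real.rpow_natCast, ← Real.rpow_mul hμ0.le, mul_comm, Real.rpow_mul hμ0.le,
      Real.rpow_logb hμ0 hμ1.ne' two_pos, Real.rpow_natCast]
  refine ⟨Real.logb μ 2, ?_, μ ^ n, one_lt_pow₀ hμ1 (by omega), A * θ ^ n, hc, ?_⟩
  · rw [Real.lt_logb_iff_rpow_lt hμ1 two_pos, Real.rpow_one]
    exact hμ2
  · filter_upwards [h n, hg] with t ht hgt
    rwa [hK, div_le_iff₀ hgt]

theorem setLIntegral_Ioc_comp_mul_left (F : ℝ → ℝ≥0∞) {c : ℝ} (hc : 0 < c) (a b : ℝ) :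
    ∫⁻ t in Ioc a b, F (c * t) = ENNReal.ofReal c⁻¹ * ∫⁻ u in Ioc (c * a) (c * b), F u := by
  have he : MeasurableEmbedding (c * ·) := (Homeomorph.mulLeft₀ c hc.ne').measurableEmbedding
  rw [← smul_eq_mul, ← lintegral_smul_measure, ← Measure.restrict_smul, ← abs_of_pos (inv_pos.2 hc),
    ← Real.map_volume_mul_left hc.ne', he.restrict_map, he.lintegral_map,
    preimage_const_mul_Ioc₀ _ _ hc, mul_div_cancel_left₀ _ hc.ne', mul_div_cancel_left₀ _ hc.ne']

/-- The mean of `f` over `(0, y]`. -/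
noncomputable def dilationMean (f : ℝ → ℝ) (y : ℝ) : ℝ≥0∞ :=
  ∫⁻ t in Ioc (0 : ℝ) 1, ENNReal.ofReal (f (t * y))

section dilationMean

variable {f : ℝ → ℝ} {ε : ℝ}

theorem dilationMean_antitoneOn (hf : AntitoneOn f (Ioi 0)) :
    AntitoneOn (dilationMean f) (Ioi 0) := fun _ hy _ hz hyz =>
  setLIntegral_mono' measurableSet_Ioc fun _ ⟨ht, _⟩ => ENNReal.ofReal_le_ofReal <|
    hf (mul_pos ht hy) (mul_pos ht hz) (mul_le_mul_of_nonneg_left hyz ht.le)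

theorem ofReal_le_dilationMean (hf : AntitoneOn f (Ioi 0)) {y : ℝ} (hy : 0 < y) :
    ENNReal.ofReal (f y) ≤ dilationMean f y :=
  calc ENNReal.ofReal (f y) = ∫⁻ _ in Ioc (0 : ℝ) 1, ENNReal.ofReal (f y) := by simp
    _ ≤ dilationMean f y := setLIntegral_mono' measurableSet_Ioc fun t ⟨ht0, ht1⟩ =>
        ENNReal.ofReal_le_ofReal (hf (mul_pos ht0 hy) hy (mul_le_of_le_one_left hy.le ht1))

/-- Halving `y` doubles the contribution of `(0, 1/2]`, while `(1/2, 1]` contributes at least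
`f y / 2`. -/
theorem dilationMean_half_add_le (hf : AntitoneOn f (Ioi 0)) {y : ℝ} (hy : 0 < y) :
    dilationMean f (y / 2) + ENNReal.ofReal (f y) ≤ 2 * dilationMean f y := by
  set F : ℝ → ℝ≥0∞ := fun t => ENNReal.ofReal (f (t * y))
  have hsplit : dilationMean f y = (∫⁻ t in Ioc 0 2⁻¹, F t) + ∫⁻ t in Ioc 2⁻¹ 1, F t := by
    rw [dilationMean, ← Ioc_union_Ioc_eq_Ioc (by norm_num : (0 : ℝ) ≤ 2⁻¹) (by norm_num),
      lintegral_union measurableSet_Ioc (Ioc_disjoint_Ioc_of_le le_rfl)]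
  have hhalf : dilationMean f (y / 2) = 2 * ∫⁻ t in Ioc 0 2⁻¹, F t := by
    have := setLIntegral_Ioc_comp_mul_left F (c := 2⁻¹) (by norm_num) 0 1
    simp only [mul_zero, mul_one, inv_inv] at this
    rw [dilationMean, ← ENNReal.ofReal_ofNat, ← this]
    simp only [F]
    congr! 3 with t
    congr 1
    ring
  have hupper : ENNReal.ofReal (f y) ≤ 2 * ∫⁻ t in Ioc 2⁻¹ 1, F t :=
    calc ENNReal.ofReal (f y) = 2 * ∫⁻ _ in Ioc (2⁻¹ : ℝ) 1, ENNReal.ofReal (f y) := by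
          rw [setLIntegral_const, Real.volume_Ioc, mul_comm, mul_assoc, ← ENNReal.ofReal_ofNat 2,
            ← ENNReal.ofReal_mul (by norm_num)]
          norm_num
      _ ≤ 2 * ∫⁻ t in Ioc 2⁻¹ 1, F t := by
          gcongr 2 * ?_
          refine setLIntegral_mono' measurableSet_Ioc fun t ⟨ht0, ht1⟩ => ?_
          have ht0 : 0 < t := lt_trans (by norm_num) ht0
          exact ENNReal.ofReal_le_ofReal (hf (mul_pos ht0 hy) hy (mul_le_of_le_one_left hy.le ht1))
  rw [hhalf, hsplit, mul_add]
  gcongr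

theorem le_pow_mul_of_le_mul {l c : ℝ} (hl : 1 < l) (hc : 0 ≤ c)
    (h : ∀ s ∈ Ioo 0 ε, f (s / l) ≤ c * f s) (n : ℕ) {s : ℝ} (hs : s ∈ Ioo 0 ε) :
    f (s / l ^ n) ≤ c ^ n * f s := by
  induction n with
  | zero => simp
  | succ n ih =>
    have hsn : s / l ^ n ∈ Ioo 0 ε :=
      ⟨div_pos hs.1 (by positivity), (div_le_self hs.1.le (one_le_pow₀ hl.le)).trans_lt hs.2⟩
    calc f (s / l ^ (n + 1)) = f (s / l ^ n / l) := by rw [pow_succ, div_div]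
      _ ≤ c * f (s / l ^ n) := h _ hsn
      _ ≤ c * (c ^ n * f s) := mul_le_mul_of_nonneg_left ih hc
      _ = c ^ (n + 1) * f s := by ring

theorem dilationMean_le_of_le_mul (hf : AntitoneOn f (Ioi 0)) {l c : ℝ} (hl : 1 < l)
    (hc : 0 ≤ c) (hcl : c < l) (h : ∀ s ∈ Ioo 0 ε, f (s / l) ≤ c * f s) {y : ℝ}
    (hy : y ∈ Ioo 0 ε) :
    dilationMean f y ≤ ENNReal.ofReal ((1 - c / l)⁻¹ * c * f y) := by
  have hl0 : 0 < l := one_pos.trans hl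
  have hq0 : 0 ≤ c / l := div_nonneg hc hl0.le
  have hq1 : c / l < 1 := (div_lt_one hl0).2 hcl
  set P : ℕ → Set ℝ := fun n => Ioc (l⁻¹ ^ (n + 1)) (l⁻¹ ^ n)
  have hcover : Ioc (0 : ℝ) 1 ⊆ ⋃ n, P n := fun t ⟨ht0, ht1⟩ =>
    mem_iUnion.2 (exists_nat_pow_near_of_lt_one ht0 ht1 (inv_pos.2 hl0) (inv_lt_one_of_one_lt₀ hl))
  have hblock : ∀ n, ∫⁻ t in P n, ENNReal.ofReal (f (t * y)) ≤
      ENNReal.ofReal (c / l) ^ n * ENNReal.ofReal (c * f y) := by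
    intro n
    have hbound : ∀ t ∈ P n, ENNReal.ofReal (f (t * y)) ≤ ENNReal.ofReal (c ^ (n + 1) * f y) := by
      rintro t ⟨ht0, -⟩
      have hpos : 0 < l⁻¹ ^ (n + 1) * y := by have := hy.1; positivity
      refine ENNReal.ofReal_le_ofReal (le_trans ?_ (le_pow_mul_of_le_mul hl hc h (n + 1) hy))
      rw [div_eq_inv_mul, ← inv_pow]
      exact hf hpos (hpos.trans (mul_lt_mul_of_pos_right ht0 hy.1)) (by nlinarith [hy.1])
    calc ∫⁻ t in P n, ENNReal.ofReal (f (t * y))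
        ≤ ∫⁻ _ in P n, ENNReal.ofReal (c ^ (n + 1) * f y) :=
          setLIntegral_mono' measurableSet_Ioc hbound
      _ = ENNReal.ofReal (c ^ (n + 1) * f y) * ENNReal.ofReal (l⁻¹ ^ n - l⁻¹ ^ (n + 1)) := by
          rw [setLIntegral_const, Real.volume_Ioc]
      _ ≤ ENNReal.ofReal (c ^ (n + 1) * f y) * ENNReal.ofReal (l⁻¹ ^ n) := by
          gcongr
          exact sub_le_self _ (by positivity)
      _ = ENNReal.ofReal (c / l) ^ n * ENNReal.ofReal (c * f y) := by
          rw [← ENNReal.ofReal_mul' (by positivity), ← ENNReal.ofReal_pow hq0,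
            ← ENNReal.ofReal_mul (by positivity)]
          congr 1
          rw [div_pow, inv_pow]
          field_simp
          ring
  calc dilationMean f y ≤ ∫⁻ t in ⋃ n, P n, ENNReal.ofReal (f (t * y)) := lintegral_mono_set hcover
    _ ≤ ∑' n, ∫⁻ t in P n, ENNReal.ofReal (f (t * y)) := lintegral_iUnion_le _ _
    _ ≤ ∑' n, ENNReal.ofReal (c / l) ^ n * ENNReal.ofReal (c * f y) := ENNReal.tsum_le_tsum hblock
    _ = ENNReal.ofReal ((1 - c / l)⁻¹ * c * f y) := by
      rw [mul_assoc, ENNReal.tsum_mul_right, ENNReal.tsum_geometric,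
        ENNReal.ofReal_mul (inv_nonneg.2 (sub_nonneg.2 hq1.le)),
        ENNReal.ofReal_inv_of_pos (by linarith), ENNReal.ofReal_sub _ hq0, ENNReal.ofReal_one]

theorem exists_dilationMean_le_of_le_on_Ioo (hf : AntitoneOn f (Ioi 0))
    (hf₀ : ∀ s, 0 < s → 0 ≤ f s) (hε : 0 < ε) {C : ℝ}
    (h : ∀ y ∈ Ioo 0 ε, dilationMean f y ≤ ENNReal.ofReal (C * f y)) :
    ∃ C', 1 ≤ C' ∧ ∀ y, 0 < y → dilationMean f y ≤ ENNReal.ofReal (C' * (f y + 1)) := by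
  have hε2 : ε / 2 ∈ Ioo 0 ε := ⟨half_pos hε, half_lt_self hε⟩
  set C' := max 1 (max C (C * f (ε / 2)))
  have h1 : 1 ≤ C' := le_max_left _ _
  have hC : C ≤ C' := (le_max_left _ _).trans (le_max_right _ _)
  have hCε : C * f (ε / 2) ≤ C' := (le_max_right _ _).trans (le_max_right _ _)
  refine ⟨C', h1, fun y hy => ?_⟩
  have hfy := hf₀ y hy
  rcases lt_or_ge y ε with hyε | hεy
  · refine (h y ⟨hy, hyε⟩).trans (ENNReal.ofReal_le_ofReal ?_)
    nlinarith
  · calc dilationMean f y ≤ dilationMean f (ε / 2) :=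
          dilationMean_antitoneOn hf hε2.1 hy (by linarith)
      _ ≤ ENNReal.ofReal (C * f (ε / 2)) := h _ hε2
      _ ≤ ENNReal.ofReal (C' * (f y + 1)) := ENNReal.ofReal_le_ofReal (by nlinarith)

theorem dilationMean_half_le (hf : AntitoneOn f (Ioi 0)) (hf₀ : ∀ s, 0 < s → 0 ≤ f s)
    {D : ℝ} (hD : 1 ≤ D) {y : ℝ} (hy : 0 < y) (h : dilationMean f y ≤ ENNReal.ofReal (D * f y)) :
    dilationMean f (y / 2) ≤ ENNReal.ofReal (2 - D⁻¹) * dilationMean f y := by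
  have hfin : dilationMean f y ≠ ⊤ := ne_top_of_le_ne_top ENNReal.ofReal_ne_top h
  have hadd := dilationMean_half_add_le hf hy
  have hfin' : dilationMean f (y / 2) ≠ ⊤ :=
    ne_top_of_le_ne_top (ENNReal.mul_ne_top ENNReal.ofNat_ne_top hfin) (le_self_add.trans hadd)
  have hadd' : (dilationMean f (y / 2)).toReal + f y ≤ 2 * (dilationMean f y).toReal := by
    have := ENNReal.toReal_mono (ENNReal.mul_ne_top ENNReal.ofNat_ne_top hfin) hadd
    rwa [ENNReal.toReal_add hfin' ENNReal.ofReal_ne_top, ENNReal.toReal_ofReal (hf₀ y hy),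
      ENNReal.toReal_mul, ENNReal.toReal_ofNat] at this
  have hmean : D⁻¹ * (dilationMean f y).toReal ≤ f y :=
    (inv_mul_le_iff₀ (one_pos.trans_le hD)).2 <|
      ENNReal.toReal_le_of_le_ofReal (by nlinarith [hf₀ y hy]) h
  have hθ : 0 ≤ 2 - D⁻¹ := by linarith [inv_le_one_of_one_le₀ hD]
  rw [← ENNReal.ofReal_toReal hfin', ← ENNReal.ofReal_toReal hfin, ← ENNReal.ofReal_mul hθ]
  exact ENNReal.ofReal_le_ofReal (by linarith)

theorem le_mul_pow_of_dilationMean_le (hf : AntitoneOn f (Ioi 0)) (hf₀ : ∀ s, 0 < s → 0 ≤ f s)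
    {D : ℝ} (hD : 1 ≤ D) (h : ∀ y ∈ Ioo 0 ε, dilationMean f y ≤ ENNReal.ofReal (D * f y))
    (n : ℕ) {y : ℝ} (hy : y ∈ Ioo 0 ε) :
    f (y / 2 ^ n) ≤ D * (2 - D⁻¹) ^ n * f y := by
  have hθ : 0 ≤ 2 - D⁻¹ := by linarith [inv_le_one_of_one_le₀ hD]
  have hmean : ∀ n : ℕ,
      dilationMean f (y / 2 ^ n) ≤ ENNReal.ofReal (2 - D⁻¹) ^ n * dilationMean f y := by
    intro n
    induction n with
    | zero => simp
    | succ n ih =>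
      have hyn : y / 2 ^ n ∈ Ioo 0 ε :=
        ⟨div_pos hy.1 (by positivity), (div_le_self hy.1.le (one_le_pow₀ one_le_two)).trans_lt hy.2⟩
      calc dilationMean f (y / 2 ^ (n + 1)) = dilationMean f (y / 2 ^ n / 2) := by
            rw [pow_succ, div_div]
        _ ≤ ENNReal.ofReal (2 - D⁻¹) * dilationMean f (y / 2 ^ n) :=
            dilationMean_half_le hf hf₀ hD hyn.1 (h _ hyn)
        _ ≤ ENNReal.ofReal (2 - D⁻¹) * (ENNReal.ofReal (2 - D⁻¹) ^ n * dilationMean f y) := by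
            gcongr
        _ = ENNReal.ofReal (2 - D⁻¹) ^ (n + 1) * dilationMean f y := by ring
  have hbound : ENNReal.ofReal (f (y / 2 ^ n)) ≤ ENNReal.ofReal (D * (2 - D⁻¹) ^ n * f y) :=
    calc ENNReal.ofReal (f (y / 2 ^ n)) ≤ dilationMean f (y / 2 ^ n) :=
          ofReal_le_dilationMean hf (div_pos hy.1 (by positivity))
      _ ≤ ENNReal.ofReal (2 - D⁻¹) ^ n * ENNReal.ofReal (D * f y) :=
          (hmean n).trans (by gcongr; exact h y hy)
      _ = ENNReal.ofReal (D * (2 - D⁻¹) ^ n * f y) := by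
          rw [← ENNReal.ofReal_pow hθ, ← ENNReal.ofReal_mul (by positivity)]
          ring_nf
  exact (ENNReal.ofReal_le_ofReal_iff (by have := hf₀ y hy.1; positivity)).1 hbound

end dilationMean

section upperConj

variable {ω : ℝ → ℝ}

theorem bddAbove_upperConj_image (hω : IsWeightFunction ω) (h5 : Omega5 ω) {s : ℝ} (hs : 0 < s) :
    BddAbove ((fun t => ω t - s * t) '' Ici 0) := by
  obtain ⟨T, hT⟩ := eventually_atTop.1 ((h5.def hs).and (eventually_ge_atTop 0))
  refine ⟨max (ω (max T 0)) 0, ?_⟩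
  rintro _ ⟨t, (ht : 0 ≤ t), rfl⟩
  rcases le_total t (max T 0) with htT | hTt
  · have := hω.monotoneOn ht (le_max_right T 0) htT
    exact le_max_of_le_left (by nlinarith)
  · obtain ⟨hlo, -⟩ := hT t ((le_max_left T 0).trans hTt)
    rw [Real.norm_eq_abs, Real.norm_eq_abs, abs_of_nonneg ht] at hlo
    exact le_max_of_le_right (by linarith [le_abs_self (ω t)])

theorem le_upperConj (hω : IsWeightFunction ω) (h5 : Omega5 ω) {s t : ℝ} (hs : 0 < s)
    (ht : 0 ≤ t) : ω t - s * t ≤ upperConj ω s :=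
  le_csSup (bddAbove_upperConj_image hω h5 hs) ⟨t, ht, rfl⟩

theorem upperConj_nonneg (hω : IsWeightFunction ω) (h5 : Omega5 ω) {s : ℝ} (hs : 0 < s) :
    0 ≤ upperConj ω s := by
  simpa [hω.map_zero] using le_upperConj hω h5 hs le_rfl

theorem upperConj_antitoneOn (hω : IsWeightFunction ω) (h5 : Omega5 ω) :
    AntitoneOn (upperConj ω) (Ioi 0) := by
  intro s hs s' _ hss'
  refine csSup_le ⟨0, 0, self_mem_Ici, by simp [hω.map_zero]⟩ ?_
  rintro _ ⟨t, ht, rfl⟩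
  exact le_trans (by nlinarith [mem_Ici.1 ht]) (le_upperConj hω h5 hs ht)

theorem tendsto_upperConj_nhdsGT_zero (hω : IsWeightFunction ω) (h5 : Omega5 ω) :
    Tendsto (upperConj ω) (𝓝[>] 0) atTop := by
  refine tendsto_atTop.2 fun M => ?_
  obtain ⟨T, hT, hT0⟩ :=
    ((hω.tendsto_atTop.eventually_ge_atTop (M + 1)).and (eventually_ge_atTop 0)).exists
  filter_upwards [Ioo_mem_nhdsGT (inv_pos.2 (by linarith : (0 : ℝ) < T + 1))] with s ⟨hs, hsT⟩
  have : s * (T + 1) < 1 := by rwa [← lt_div_iff₀ (by linarith), one_div]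
  nlinarith [le_upperConj hω h5 hs hT0]

theorem upperConjIota_of_pos {t : ℝ} (ht : 0 < t) : upperConjIota ω t = upperConj ω t⁻¹ := by
  rw [upperConjIota, if_neg ht.ne', one_div]

theorem tendsto_upperConjIota_atTop (hω : IsWeightFunction ω) (h5 : Omega5 ω) :
    Tendsto (upperConjIota ω) atTop atTop :=
  ((tendsto_upperConj_nhdsGT_zero hω h5).comp tendsto_inv_atTop_nhdsGT_zero).congr'
    (by filter_upwards [eventually_gt_atTop 0] with t ht using (upperConjIota_of_pos ht).symm)

theorem exists_dilationMean_upperConj_le_of_pcond (hω : IsWeightFunction ω) (h5 : Omega5 ω)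
    {γ : ℝ} (hγ : 1 < γ) (hP : Pcond (upperConjIota ω) γ) :
    ∃ C, 1 ≤ C ∧ ∀ y, 0 < y →
      dilationMean (upperConj ω) y ≤ ENNReal.ofReal (C * (upperConj ω y + 1)) := by
  obtain ⟨l, c, hl, hc, hcl, hev⟩ := hP.exists_eventually_le_mul hγ.le
    ((tendsto_upperConjIota_atTop hω h5).eventually_gt_atTop 0)
  have hnear : ∀ᶠ s in 𝓝[>] 0, upperConj ω (s / l) ≤ c * upperConj ω s := by
    filter_upwards [tendsto_inv_nhdsGT_zero.eventually hev, self_mem_nhdsWithin]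
      with s hs (hs0 : 0 < s)
    rwa [upperConjIota_of_pos (by positivity), upperConjIota_of_pos (by positivity), mul_inv,
      inv_inv, mul_comm, ← div_eq_mul_inv] at hs
  obtain ⟨ε, hε, hsub⟩ := mem_nhdsGT_iff_exists_Ioo_subset.1 hnear
  exact exists_dilationMean_le_of_le_on_Ioo (upperConj_antitoneOn hω h5)
    (fun s hs => upperConj_nonneg hω h5 hs) hε
    (fun y hy => dilationMean_le_of_le_mul (upperConj_antitoneOn hω h5) hl hc hcl
      (fun s hs => hsub hs) hy)

theorem exists_one_lt_pcond_of_dilationMean_upperConj_le (hω : IsWeightFunction ω)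
    (h5 : Omega5 ω) {C : ℝ} (hC : 1 ≤ C)
    (h : ∀ y, 0 < y → dilationMean (upperConj ω) y ≤ ENNReal.ofReal (C * (upperConj ω y + 1))) :
    ∃ γ, 1 < γ ∧ Pcond (upperConjIota ω) γ := by
  have hnear : ∀ᶠ y in 𝓝[>] 0,
      dilationMean (upperConj ω) y ≤ ENNReal.ofReal (2 * C * upperConj ω y) := by
    filter_upwards [(tendsto_upperConj_nhdsGT_zero hω h5).eventually_ge_atTop 1,
      self_mem_nhdsWithin] with y h1 hy
    exact (h y hy).trans (ENNReal.ofReal_le_ofReal (by nlinarith))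
  obtain ⟨ε, hε, hsub⟩ := mem_nhdsGT_iff_exists_Ioo_subset.1 hnear
  have hD : 1 ≤ 2 * C := by linarith
  refine exists_one_lt_pcond_of_le_pow (A := 2 * C) (θ := 2 - (2 * C)⁻¹)
    (by linarith [inv_le_one_of_one_le₀ hD]) (by linarith [inv_pos.2 (one_pos.trans_le hD)])
    ((tendsto_upperConjIota_atTop hω h5).eventually_gt_atTop 0) fun n => ?_
  filter_upwards [tendsto_inv_atTop_nhdsGT_zero.eventually (Ioo_mem_nhdsGT hε)] with t ht
  have ht0 : 0 < t := inv_pos.1 ht.1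
  rw [upperConjIota_of_pos (by positivity), upperConjIota_of_pos ht0, mul_inv, mul_comm,
    ← div_eq_mul_inv]
  exact le_mul_pow_of_dilationMean_le (upperConj_antitoneOn hω h5)
    (fun s hs => upperConj_nonneg hω h5 hs) hD (fun y hy => hsub hy) n ht

end upperConj

/-- Lemma 2.1.1 analogue: characterization of
`γ((ω⋆)^ι) > 1` via an integral estimate for `ω⋆`. -/
theorem gamma_upperConjIota_gt_one_iff
    (ω : ℝ → ℝ) (hω : IsWeightFunction ω) (h5 : Omega5 ω) :
    1 < gammaIndex (upperConjIota ω) ↔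
      ∃ C : ℝ, 1 ≤ C ∧ ∀ y : ℝ, 0 < y →
        (∫⁻ t in Set.Ioc (0:ℝ) 1, ENNReal.ofReal (upperConj ω (t * y))) ≤
          ENNReal.ofReal (C * (upperConj ω y + 1)) := by
  rw [one_lt_gammaIndex_iff]
  constructor
  · rintro ⟨γ, hγ, hP⟩
    exact exists_dilationMean_upperConj_le_of_pcond hω h5 hγ hP
  · rintro ⟨C, hC, h⟩
    exact exists_one_lt_pcond_of_dilationMean_upperConj_le hω h5 hC h
end

section
/- Let ω ∈ W_0 satisfy (ω_5), with associated weight matrix {W^l : l > 0} and w^l_j := W^l_j / j!. Then: (1) for all l > 0 and all s > 0, 2(ω_{W^{2l}})⋆(s) ≤ (ω_{W^l})⋆(2s); and (2) there exists A ≥ 1 such that for all l > 0 and all s > 0, h_{w^l}(s) ≤ (h_{w^{2l}}(As))². -/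
open Filter MeasureTheory Set Asymptotics

/-! The index doubling `p ↦ 2p` relates the matrix to itself: `W^l_{2p} = (W^{2l}_p)^2` straight
from the definition. Comparing the `p`-th term of `ω_{W^{2l}}` with the `2p`-th term of `ω_{W^l}`
gives `2 ω_{W^{2l}} ≤ ω_{W^l}` pointwise, which passes to the upper conjugates; together with
`(p!)^2 ≤ (2p)!` it gives `w^l_{2p} ≤ (w^{2l}_p)^2`, whence (2) with `A = 1`. What remains is to
see that the suprema involved are finite: `(ω₃)` makes `φ*_ω` finite, which yields
`ω_{W^l}(t) ≤ ω(max t 1) / l`, and `(ω₅)` then bounds `ω_{W^l}(t) - s t`. -/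

section Conjugates

variable {f g : ℝ → ℝ}

theorem mul_upperConj_le {c s : ℝ} (hc : 0 < c) (hfg : ∀ t ≥ 0, c * f t ≤ g t)
    (hg : BddAbove ((fun t => g t - c * s * t) '' Ici 0)) :
    c * upperConj f s ≤ upperConj g (c * s) := by
  rw [upperConj, upperConj, ← le_div_iff₀' hc]
  refine csSup_le (nonempty_Ici.image _) ?_
  rintro _ ⟨t, ht, rfl⟩
  rw [le_div_iff₀' hc]
  calc c * (f t - s * t) ≤ g t - c * s * t := by linarith [hfg t ht]
    _ ≤ _ := le_csSup hg ⟨t, ht, rfl⟩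

theorem bddAbove_image_sub_mul_of_isLittleO {s : ℝ} (hs : 0 < s) (hg : MonotoneOn g (Ici 0))
    (hgo : g =o[atTop] fun t => t) (hfg : ∀ t ≥ 0, f t ≤ g t) :
    BddAbove ((fun t => f t - s * t) '' Ici 0) := by
  obtain ⟨T, hT⟩ := eventually_atTop.mp (hgo.def hs)
  refine ⟨max (g (max T 0)) 0, ?_⟩
  rintro _ ⟨t, ht, rfl⟩
  have ht : 0 ≤ t := ht
  have hst : 0 ≤ s * t := mul_nonneg hs.le ht
  rcases le_total T t with hTt | htT
  · have hgt := hT t hTt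
    rw [Real.norm_of_nonneg ht] at hgt
    linarith [hfg t ht, Real.le_norm_self (g t), le_max_right (g (max T 0)) 0]
  · have hgt := hg ht (le_max_right T 0) (le_max_of_le_left htT)
    linarith [hfg t ht, le_max_left (g (max T 0)) 0]

end Conjugates

section SequenceFunctions

variable {M N : ℕ → ℝ}

theorem two_mul_assocWeight_le (hMN : ∀ p, M (2 * p) = N p ^ 2) {t : ℝ}
    (hbdd : 0 < t → BddAbove (range fun p => Real.log (t ^ p / M p))) :
    2 * assocWeight N t ≤ assocWeight M t := by
  unfold assocWeight
  split_ifs with ht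
  · norm_num
  have hdouble (p : ℕ) :
      Real.log (t ^ p / N p) = Real.log (t ^ (2 * p) / M (2 * p)) / 2 := by
    rw [hMN, pow_mul', ← div_pow, Real.log_pow]
    push_cast
    ring
  have hsup : (⨆ p, Real.log (t ^ p / N p)) ≤ (⨆ p, Real.log (t ^ p / M p)) / 2 :=
    ciSup_le fun p => by
      rw [hdouble]
      linarith [le_ciSup (hbdd (not_le.mp ht)) (2 * p)]
  linarith

theorem hFun_le_sq (hM : ∀ k, 0 ≤ M k) (hN : ∀ k, 0 ≤ N k) (hMN : ∀ k, M (2 * k) ≤ N k ^ 2)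
    {t : ℝ} (ht : 0 ≤ t) : hFun M t ≤ hFun N t ^ 2 := by
  have hbdd : BddBelow (range fun k => M k * t ^ k) :=
    ⟨0, forall_mem_range.2 fun k => mul_nonneg (hM k) (pow_nonneg ht k)⟩
  have hnonneg : 0 ≤ hFun M t := le_ciInf fun k => mul_nonneg (hM k) (pow_nonneg ht k)
  have hsqrt : √(hFun M t) ≤ hFun N t := le_ciInf fun k =>
    calc √(hFun M t) ≤ √(M (2 * k) * t ^ (2 * k)) := Real.sqrt_le_sqrt (ciInf_le hbdd _)
      _ ≤ √((N k * t ^ k) ^ 2) := by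
          rw [mul_pow, ← pow_mul, mul_comm k 2]
          gcongr
          exact hMN k
      _ = N k * t ^ k := Real.sqrt_sq (mul_nonneg (hN k) (pow_nonneg ht k))
  calc hFun M t = √(hFun M t) ^ 2 := (Real.sq_sqrt hnonneg).symm
    _ ≤ hFun N t ^ 2 := pow_le_pow_left₀ (Real.sqrt_nonneg _) hsqrt 2

end SequenceFunctions

section WeightMatrix

variable {ω : ℝ → ℝ}

theorem IsWeightFunction.nonneg (hω : IsWeightFunction ω) {t : ℝ} (ht : 0 ≤ t) : 0 ≤ ω t :=
  hω.map_zero ▸ hω.monotoneOn self_mem_Ici ht ht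

theorem Omega3.eventually_mul_le_comp_exp (h3 : Omega3 ω) (hω : IsWeightFunction ω) (x : ℝ) :
    ∀ᶠ y in atTop, x * y ≤ ω (Real.exp y) := by
  have hc : 0 < (|x| + 1)⁻¹ := by positivity
  filter_upwards [Real.tendsto_exp_atTop.eventually (h3.def hc), eventually_ge_atTop 0]
    with y hy hy0
  rw [Real.log_exp, Real.norm_of_nonneg hy0,
    Real.norm_of_nonneg (hω.nonneg (Real.exp_pos y).le), le_inv_mul_iff₀ (by positivity)] at hy
  nlinarith [le_abs_self x]

theorem bddAbove_phiStar_image (hω : IsWeightFunction ω) (h3 : Omega3 ω) (x : ℝ) :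
    BddAbove ((fun y => x * y - ω (Real.exp y)) '' Ici 0) := by
  obtain ⟨Y, hY⟩ := eventually_atTop.mp (h3.eventually_mul_le_comp_exp hω x)
  refine ⟨|x| * max Y 0, ?_⟩
  rintro _ ⟨y, hy, rfl⟩
  have hy : 0 ≤ y := hy
  have hbound : 0 ≤ |x| * max Y 0 := mul_nonneg (abs_nonneg x) (le_max_right Y 0)
  rcases le_total Y y with hYy | hyY
  · linarith [hY y hYy]
  · have hxy : x * y ≤ |x| * max Y 0 :=
      calc x * y ≤ |x| * y := mul_le_mul_of_nonneg_right (le_abs_self x) hy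
        _ ≤ |x| * max Y 0 := mul_le_mul_of_nonneg_left (le_max_of_le_left hyY) (abs_nonneg x)
    linarith [hω.nonneg (Real.exp_pos y).le]

theorem le_phiStar (hω : IsWeightFunction ω) (h3 : Omega3 ω) (x : ℝ) {y : ℝ} (hy : 0 ≤ y) :
    x * y - ω (Real.exp y) ≤ phiStar ω x :=
  le_csSup (bddAbove_phiStar_image hω h3 x) ⟨y, hy, rfl⟩

theorem Wseq_pos (ω : ℝ → ℝ) (l : ℝ) (j : ℕ) : 0 < Wseq ω l j := Real.exp_pos _

theorem wseq_pos (ω : ℝ → ℝ) (l : ℝ) (j : ℕ) : 0 < wseq ω l j :=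
  div_pos (Wseq_pos ω l j) (mod_cast j.factorial_pos)

theorem Wseq_two_mul {l : ℝ} (hl : l ≠ 0) (p : ℕ) :
    Wseq ω l (2 * p) = Wseq ω (2 * l) p ^ 2 := by
  rw [Wseq, Wseq, ← Real.exp_nat_mul]
  congr 1
  push_cast
  rw [show l * (2 * p) = 2 * l * p by ring]
  field_simp

theorem wseq_two_mul_le {l : ℝ} (hl : l ≠ 0) (p : ℕ) :
    wseq ω l (2 * p) ≤ wseq ω (2 * l) p ^ 2 := by
  rw [wseq, wseq, div_pow, Wseq_two_mul hl]
  have hfact : p.factorial ^ 2 ≤ (2 * p).factorial := by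
    rw [sq, two_mul]
    exact Nat.le_of_dvd (Nat.factorial_pos _) (Nat.factorial_mul_factorial_dvd_factorial_add p p)
  gcongr
  exact_mod_cast hfact

theorem log_pow_div_Wseq_le (hω : IsWeightFunction ω) (h3 : Omega3 ω) {l t : ℝ} (hl : 0 < l)
    (ht : 0 < t) (p : ℕ) : Real.log (t ^ p / Wseq ω l p) ≤ ω (max t 1) / l := by
  -- test `φ*_ω(l p)` at `y = log (max t 1)`
  have hy := le_phiStar hω h3 (l * p) (le_max_right (Real.log t) 0)
  rw [Real.exp_monotone.map_max, Real.exp_log ht, Real.exp_zero] at hy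
  rw [Real.log_div (pow_ne_zero _ ht.ne') (Wseq_pos ω l p).ne', Real.log_pow, Wseq, Real.log_exp]
  calc p * Real.log t - 1 / l * phiStar ω (l * p)
      ≤ p * max (Real.log t) 0 - 1 / l * (l * p * max (Real.log t) 0 - ω (max t 1)) := by
        gcongr
        exact le_max_left _ _
    _ = ω (max t 1) / l := by field_simp; ring

theorem bddAbove_range_log_pow_div_Wseq (hω : IsWeightFunction ω) (h3 : Omega3 ω) {l t : ℝ}
    (hl : 0 < l) (ht : 0 < t) : BddAbove (range fun p => Real.log (t ^ p / Wseq ω l p)) :=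
  ⟨_, forall_mem_range.2 (log_pow_div_Wseq_le hω h3 hl ht)⟩

theorem assocWeight_Wseq_le (hω : IsWeightFunction ω) (h3 : Omega3 ω) {l : ℝ} (hl : 0 < l)
    (t : ℝ) : assocWeight (Wseq ω l) t ≤ ω (max t 1) / l := by
  unfold assocWeight
  split_ifs with ht
  · exact div_nonneg (hω.nonneg (zero_le_one.trans (le_max_right t 1))) hl.le
  · exact ciSup_le (log_pow_div_Wseq_le hω h3 hl (not_le.mp ht))

theorem bddAbove_upperConj_image_assocWeight_Wseq (hω : IsWeightFunction ω) (h3 : Omega3 ω)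
    (h5 : Omega5 ω) {l s : ℝ} (hl : 0 < l) (hs : 0 < s) :
    BddAbove ((fun t => assocWeight (Wseq ω l) t - s * t) '' Ici 0) := by
  have hmono : MonotoneOn (fun t => ω (max t 1) / l) (Ici 0) := fun a ha b hb hab =>
    div_le_div_of_nonneg_right (hω.monotoneOn (zero_le_one.trans (le_max_right a 1))
      (zero_le_one.trans (le_max_right b 1)) (max_le_max_right 1 hab)) hl.le
  have hlittle : (fun t => ω (max t 1) / l) =o[atTop] fun t => t := by
    refine (h5.const_mul_left l⁻¹).congr' ?_ EventuallyEq.rfl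
    filter_upwards [eventually_ge_atTop 1] with t ht
    rw [max_eq_left ht, div_eq_inv_mul]
  exact bddAbove_image_sub_mul_of_isLittleO hs hmono hlittle
    fun t _ => assocWeight_Wseq_le hω h3 hl t

end WeightMatrix

/-- Lemma on `h_{w^l}` and the conjugates of `ω_{W^l}`. -/
theorem conj_and_hFun_matrix_estimates
    (ω : ℝ → ℝ) (hω : InW0 ω) (h5 : Omega5 ω) :
    (∀ l : ℝ, 0 < l → ∀ s : ℝ, 0 < s →
      2 * upperConj (assocWeight (Wseq ω (2 * l))) s ≤
        upperConj (assocWeight (Wseq ω l)) (2 * s)) ∧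
    (∃ A : ℝ, 1 ≤ A ∧ ∀ l : ℝ, 0 < l → ∀ s : ℝ, 0 < s →
      hFun (wseq ω l) s ≤ (hFun (wseq ω (2 * l)) (A * s)) ^ 2) := by
  obtain ⟨hweight, -, h3, -⟩ := hω
  refine ⟨fun l hl s hs => ?_, ⟨1, le_rfl, fun l hl s hs => ?_⟩⟩
  · refine mul_upperConj_le two_pos (fun t _ => ?_)
      (bddAbove_upperConj_image_assocWeight_Wseq hweight h3 h5 hl (mul_pos two_pos hs))
    exact two_mul_assocWeight_le (Wseq_two_mul hl.ne')
      (bddAbove_range_log_pow_div_Wseq hweight h3 hl)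
  · rw [one_mul]
    exact hFun_le_sq (fun k => (wseq_pos ω l k).le) (fun k => (wseq_pos ω (2 * l) k).le)
      (wseq_two_mul_le hl.ne') hs.le
end

section
/- Let M, N ∈ LC. Then the mixed moderate growth condition (M,N)_(mg) — there exists C ≥ 1 with M_{j+k} ≤ C^{j+k} N_j N_k for all j, k ∈ ℕ — holds if and only if there exists A ≥ 1 such that 2ω_N(t) ≤ ω_M(At) for all t ≥ 0, equivalently if and only if there exists A ≥ 1 with h_M(t) ≤ (h_N(At))² for all t > 0. -/
open Filter MeasureTheory Set Asymptotics

/-!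
For `M ∈ LC` the quotients `μ_p = M_{p+1}/M_p` increase, so at `t = μ_p` the sequence
`q ↦ t^q/M_q` is maximal at `q = p` and `ω_M(μ_p) = log (μ_p^p/M_p)`. Given `(M,N)_(mg)` with
constant `C`, adding the terms of index `j` and `k` of the supremum defining `ω_N(t)` gives
`2 ω_N(t) ≤ ω_M(C t)`; conversely, evaluating `2 ω_N ≤ ω_M(A ·)` at `t = μ_{j+k}/A` recovers
`M_{j+k} ≤ A^{j+k} N_j N_k`. The condition on `h_M, h_N` is the same inequality, transported by
`h_M(t) = exp(-ω_M(1/t))`.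
-/

open Real

/-- The mixed moderate growth condition `(M,N)_(mg)`. -/
def MixedModerateGrowth (M N : ℕ → ℝ) : Prop :=
  ∃ C : ℝ, 1 ≤ C ∧ ∀ j k : ℕ, M (j + k) ≤ C ^ (j + k) * N j * N k

lemma two_mul_ciSup_le {ι : Type*} [Nonempty ι] {f : ι → ℝ} {a : ℝ}
    (h : ∀ i j, f i + f j ≤ a) : 2 * ⨆ i, f i ≤ a := by
  have : ⨆ i, f i ≤ a - ⨆ i, f i :=
    ciSup_le fun i => le_sub_comm.1 (ciSup_le fun j => by linarith [h i j])
  linarith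

lemma log_pow_div_add_log_pow_div {t a b : ℝ} (ht : t ≠ 0) (ha : a ≠ 0) (hb : b ≠ 0) (j k : ℕ) :
    log (t ^ j / a) + log (t ^ k / b) = log (t ^ (j + k) / (a * b)) := by
  rw [← log_mul (div_ne_zero (pow_ne_zero _ ht) ha) (div_ne_zero (pow_ne_zero _ ht) hb),
    div_mul_div_comm, pow_add]

lemma pow_div_le_mul_pow_div_iff {t C a m : ℝ} (ht : 0 < t) (ha : 0 < a) (hm : 0 < m) (n : ℕ) :
    t ^ n / a ≤ (C * t) ^ n / m ↔ m ≤ C ^ n * a := by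
  rw [div_le_div_iff₀ ha hm, mul_pow, mul_comm (t ^ n), mul_right_comm,
    mul_le_mul_iff_of_pos_right (pow_pos ht n)]

lemma assocWeight_of_pos (M : ℕ → ℝ) {t : ℝ} (ht : 0 < t) :
    assocWeight M t = ⨆ p : ℕ, log (t ^ p / M p) := by
  rw [assocWeight, if_neg ht.not_ge]

namespace LCseq

variable {M : ℕ → ℝ}

lemma monotone_div_succ (hM : LCseq M) : Monotone fun p => M (p + 1) / M p := by
  refine monotone_nat_of_le_succ fun q => ?_
  have hconv := hM.2.2.2.1 (q + 1) q.succ_pos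
  rw [Nat.add_sub_cancel] at hconv
  rw [div_le_div_iff₀ (hM.1 q) (hM.1 (q + 1))]
  nlinarith

/-- The quotient of consecutive terms of `q ↦ μ^q / M q` is `μ / μ_q`, which is `≥ 1` for
`q < p` and `≤ 1` for `q ≥ p` when `μ = μ_p`. -/
lemma pow_div_le_pow_div_of_div_succ (hM : LCseq M) (p q : ℕ) :
    (M (p + 1) / M p) ^ q / M q ≤ (M (p + 1) / M p) ^ p / M p := by
  set μ := M (p + 1) / M p
  have hpos : ∀ n, 0 < μ ^ n / M n := fun n =>
    div_pos (pow_pos (div_pos (hM.1 _) (hM.1 _)) n) (hM.1 n)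
  have hstep : ∀ n, μ ^ (n + 1) / M (n + 1) = μ ^ n / M n * (μ / (M (n + 1) / M n)) := by
    intro n
    have hMn := (hM.1 n).ne'
    field_simp
    ring
  have hup : MonotoneOn (fun n => μ ^ n / M n) (Iic p) :=
    monotoneOn_of_le_add_one ordConnected_Iic fun n _ _ hn => by
      rw [hstep]
      refine le_mul_of_one_le_right (hpos n).le ((one_le_div (div_pos (hM.1 _) (hM.1 _))).2 ?_)
      exact hM.monotone_div_succ (Nat.le_of_succ_le (mem_Iic.1 hn))
  have hdown : AntitoneOn (fun n => μ ^ n / M n) (Ici p) :=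
    antitoneOn_of_add_one_le ordConnected_Ici fun n _ hn _ => by
      rw [hstep]
      refine mul_le_of_le_one_right (hpos n).le ((div_le_one (div_pos (hM.1 _) (hM.1 _))).2 ?_)
      exact hM.monotone_div_succ (mem_Ici.1 hn)
  rcases le_total q p with hqp | hpq
  · exact hup hqp (mem_Iic.2 le_rfl) hqp
  · exact hdown (mem_Ici.2 le_rfl) hpq hpq

lemma bddAbove_log_pow_div (hM : LCseq M) {t : ℝ} (ht : 0 < t) :
    BddAbove (range fun p => log (t ^ p / M p)) := by
  refine Filter.IsBoundedUnder.bddAbove_range (Filter.isBoundedUnder_of_eventually_le (a := 0) ?_)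
  filter_upwards [hM.2.2.2.2.eventually_ge_atTop t, Filter.eventually_gt_atTop 0] with p hp hp0
  have htp : t ^ p ≤ M p := by
    calc t ^ p ≤ (M p ^ ((1 : ℝ) / p)) ^ p := pow_le_pow_left₀ ht.le hp p
      _ = M p := by
        rw [← rpow_natCast, ← rpow_mul (hM.1 p).le,
          one_div_mul_cancel (Nat.cast_ne_zero.2 hp0.ne'), rpow_one]
  exact log_nonpos (div_nonneg (pow_nonneg ht.le p) (hM.1 p).le) ((div_le_one (hM.1 p)).2 htp)

lemma log_pow_div_le_assocWeight (hM : LCseq M) {t : ℝ} (ht : 0 < t) (p : ℕ) :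
    log (t ^ p / M p) ≤ assocWeight M t := by
  rw [assocWeight_of_pos M ht]
  exact le_ciSup (hM.bddAbove_log_pow_div ht) p

lemma assocWeight_div_succ (hM : LCseq M) (p : ℕ) :
    assocWeight M (M (p + 1) / M p) = log ((M (p + 1) / M p) ^ p / M p) := by
  have hμ : 0 < M (p + 1) / M p := div_pos (hM.1 _) (hM.1 _)
  refine le_antisymm ?_ (hM.log_pow_div_le_assocWeight hμ p)
  rw [assocWeight_of_pos M hμ]
  exact ciSup_le fun q =>
    log_le_log (div_pos (pow_pos hμ q) (hM.1 q)) (hM.pow_div_le_pow_div_of_div_succ p q)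

lemma hFun_eq_exp_neg_assocWeight_inv (hM : LCseq M) {t : ℝ} (ht : 0 < t) :
    hFun M t = exp (-assocWeight M t⁻¹) := by
  have hpos : ∀ p, 0 < M p * t ^ p := fun p => mul_pos (hM.1 p) (pow_pos ht p)
  have hlog : ∀ p, log (t⁻¹ ^ p / M p) = -log (M p * t ^ p) := fun p => by
    rw [inv_pow, div_eq_mul_inv, ← mul_inv, log_inv, mul_comm]
  have hbdd : BddBelow (range fun p => M p * t ^ p) := ⟨0, by
    rintro _ ⟨p, rfl⟩
    exact (hpos p).le⟩
  obtain ⟨B, hB⟩ := hM.bddAbove_log_pow_div (inv_pos.2 ht)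
  have hh : 0 < hFun M t := by
    refine (exp_pos (-B)).trans_le (le_ciInf fun p => ?_)
    have : log (t⁻¹ ^ p / M p) ≤ B := hB ⟨p, rfl⟩
    rw [hlog] at this
    rw [← exp_log (hpos p)]
    exact exp_le_exp.2 (by linarith)
  refine le_antisymm ?_ (le_ciInf fun p => ?_)
  · rw [← exp_log hh, exp_le_exp, assocWeight_of_pos M (inv_pos.2 ht), le_neg]
    refine ciSup_le fun p => ?_
    rw [hlog, neg_le_neg_iff]
    exact log_le_log hh (ciInf_le hbdd p)
  · have := hM.log_pow_div_le_assocWeight (inv_pos.2 ht) p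
    rw [hlog] at this
    rw [← exp_log (hpos p)]
    exact exp_le_exp.2 (by linarith)

end LCseq

variable {M N : ℕ → ℝ}

lemma MixedModerateGrowth.two_mul_assocWeight_le (h : MixedModerateGrowth M N)
    (hM : LCseq M) (hN : LCseq N) :
    ∃ A : ℝ, 1 ≤ A ∧ ∀ t : ℝ, 0 ≤ t → 2 * assocWeight N t ≤ assocWeight M (A * t) := by
  obtain ⟨C, hC, hmg⟩ := h
  refine ⟨C, hC, fun t ht => ?_⟩
  rcases ht.eq_or_lt with rfl | ht
  · simp [assocWeight]
  rw [assocWeight_of_pos N ht]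
  refine two_mul_ciSup_le fun j k => ?_
  have hNj := hN.1 j
  have hNk := hN.1 k
  calc log (t ^ j / N j) + log (t ^ k / N k) = log (t ^ (j + k) / (N j * N k)) :=
        log_pow_div_add_log_pow_div ht.ne' hNj.ne' hNk.ne' j k
    _ ≤ log ((C * t) ^ (j + k) / M (j + k)) := by
        refine log_le_log (div_pos (pow_pos ht _) (mul_pos hNj hNk))
          ((pow_div_le_mul_pow_div_iff ht (mul_pos hNj hNk) (hM.1 _) _).2 ?_)
        simpa only [mul_assoc] using hmg j k
    _ ≤ assocWeight M (C * t) := hM.log_pow_div_le_assocWeight (by positivity) _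

lemma mixedModerateGrowth_of_two_mul_assocWeight_le (hM : LCseq M) (hN : LCseq N)
    (h : ∃ A : ℝ, 1 ≤ A ∧ ∀ t : ℝ, 0 ≤ t → 2 * assocWeight N t ≤ assocWeight M (A * t)) :
    MixedModerateGrowth M N := by
  obtain ⟨A, hA, hω⟩ := h
  refine ⟨A, hA, fun j k => ?_⟩
  have hA0 : 0 < A := by linarith
  have hNj := hN.1 j
  have hNk := hN.1 k
  set μ := M (j + k + 1) / M (j + k)
  have hμ : 0 < μ := div_pos (hM.1 _) (hM.1 _)
  set t := μ / A
  have ht : 0 < t := div_pos hμ hA0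
  have hAt : A * t = μ := mul_div_cancel₀ μ hA0.ne'
  have hMjk := hM.1 (j + k)
  rw [mul_assoc, ← pow_div_le_mul_pow_div_iff ht (mul_pos hNj hNk) hMjk,
    ← log_le_log_iff (div_pos (pow_pos ht _) (mul_pos hNj hNk))
    (div_pos (pow_pos (mul_pos hA0 ht) _) hMjk)]
  calc log (t ^ (j + k) / (N j * N k)) = log (t ^ j / N j) + log (t ^ k / N k) :=
        (log_pow_div_add_log_pow_div ht.ne' hNj.ne' hNk.ne' j k).symm
    _ ≤ 2 * assocWeight N t := by
        linarith [hN.log_pow_div_le_assocWeight ht j, hN.log_pow_div_le_assocWeight ht k]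
    _ ≤ assocWeight M (A * t) := hω t ht.le
    _ = log ((A * t) ^ (j + k) / M (j + k)) := by rw [hAt]; exact hM.assocWeight_div_succ (j + k)

lemma hFun_le_sq_iff_two_mul_assocWeight_le (hM : LCseq M) (hN : LCseq N) {A s : ℝ}
    (hA : 0 < A) (hs : 0 < s) :
    hFun M (A * s)⁻¹ ≤ hFun N s⁻¹ ^ 2 ↔ 2 * assocWeight N s ≤ assocWeight M (A * s) := by
  rw [hM.hFun_eq_exp_neg_assocWeight_inv (by positivity),
    hN.hFun_eq_exp_neg_assocWeight_inv (by positivity), inv_inv, inv_inv, ← exp_nat_mul,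
    exp_le_exp, Nat.cast_two, mul_neg, neg_le_neg_iff]

lemma exists_two_mul_assocWeight_le_iff_exists_hFun_le_sq (hM : LCseq M) (hN : LCseq N) :
    (∃ A : ℝ, 1 ≤ A ∧ ∀ t : ℝ, 0 ≤ t → 2 * assocWeight N t ≤ assocWeight M (A * t)) ↔
      ∃ A : ℝ, 1 ≤ A ∧ ∀ t : ℝ, 0 < t → hFun M t ≤ hFun N (A * t) ^ 2 := by
  refine exists_congr fun A => and_congr_right fun hA => ?_
  have hA0 : 0 < A := by linarith
  constructor
  · intro hω t ht
    have hs : 0 < (A * t)⁻¹ := by positivity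
    have := (hFun_le_sq_iff_two_mul_assocWeight_le hM hN hA0 hs).2 (hω _ hs.le)
    have hAt : (A * (A * t)⁻¹)⁻¹ = t := by field_simp
    rwa [hAt, inv_inv] at this
  · intro hh s hs
    rcases hs.eq_or_lt with rfl | hs
    · simp [assocWeight]
    refine (hFun_le_sq_iff_two_mul_assocWeight_le hM hN hA0 hs).1 ?_
    have hAs : A * (A * s)⁻¹ = s⁻¹ := by field_simp
    simpa only [hAs] using hh (A * s)⁻¹ (by positivity)

/-- characterization of the mixed moderate growth condition
`(M,N)_{(mg)}` via `ω_M`, `ω_N` and via `h_M`, `h_N`. -/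
theorem mixed_moderate_growth_characterization
    (M N : ℕ → ℝ) (hM : LCseq M) (hN : LCseq N) :
    ((∃ C : ℝ, 1 ≤ C ∧ ∀ j k : ℕ, M (j + k) ≤ C ^ (j + k) * N j * N k) ↔
      (∃ A : ℝ, 1 ≤ A ∧ ∀ t : ℝ, 0 ≤ t →
        2 * assocWeight N t ≤ assocWeight M (A * t))) ∧
    ((∃ C : ℝ, 1 ≤ C ∧ ∀ j k : ℕ, M (j + k) ≤ C ^ (j + k) * N j * N k) ↔
      (∃ A : ℝ, 1 ≤ A ∧ ∀ t : ℝ, 0 < t → hFun M t ≤ (hFun N (A * t)) ^ 2)) := by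
  have hω : MixedModerateGrowth M N ↔
      ∃ A : ℝ, 1 ≤ A ∧ ∀ t : ℝ, 0 ≤ t → 2 * assocWeight N t ≤ assocWeight M (A * t) :=
    ⟨fun h => h.two_mul_assocWeight_le hM hN, mixedModerateGrowth_of_two_mul_assocWeight_le hM hN⟩
  exact ⟨hω, hω.trans (exists_two_mul_assocWeight_le_iff_exists_hFun_le_sq hM hN)⟩
end

section
/- A weight function ω satisfies (ω_1) — there exists L ≥ 1 such that ω(2t) ≤ L(ω(t) + 1) for all t ≥ 0 — if and only if γ(ω) > 0, i.e. if and only if there exist γ > 0 and K > 1 with limsup_{t→∞} ω(K^γ t)/ω(t) < K. -/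
open Filter MeasureTheory Set Asymptotics

/-! If `ω (2t) ≤ L (ω t + 1)`, then `ω (2t) ≤ (L + 1) ω t` as soon as `ω t ≥ L`, which is
`(P_{ω,γ})` for `K = L + 2` and `γ = log_K 2`, i.e. `K ^ γ = 2`. Conversely `(P_{ω,γ})` gives
`ω (a t) ≤ c ω t` for large `t`, with `a = K ^ γ > 1`; iterating it `n` times with `a ^ n ≥ 2`
and using monotonicity yields `(ω₁)` for large `t`, while below that threshold
`ω (2t)` is bounded and `ω ≥ 0`. -/

lemma gammaIndex_pos_iff {ω : ℝ → ℝ} : 0 < gammaIndex ω ↔ ∃ γ : ℝ, 0 < γ ∧ Pcond ω γ := by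
  simp only [gammaIndex, mem_ofPred_eq, lt_iSup_iff, ENNReal.ofReal_pos, exists_prop]
  exact exists_congr fun γ => ⟨fun ⟨h, hγ⟩ => ⟨hγ, h.2⟩, fun ⟨hγ, h⟩ => ⟨⟨hγ, h⟩, hγ⟩⟩

lemma pcond_iff_eventually_le_mul {ω : ℝ → ℝ} {γ : ℝ} (hpos : ∀ᶠ t in atTop, 0 < ω t) :
    Pcond ω γ ↔ ∃ K : ℝ, 1 < K ∧ ∃ c : ℝ, c < K ∧ ∀ᶠ t in atTop, ω (K ^ γ * t) ≤ c * ω t := by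
  refine exists_congr fun K => and_congr_right fun _ => exists_congr fun c =>
    and_congr_right fun _ => eventually_congr ?_
  filter_upwards [hpos] with t ht using div_le_iff₀ ht

lemma le_pow_mul_of_le_mul_s16 {ω : ℝ → ℝ} {a c T : ℝ} (ha : 1 ≤ a) (hc : 0 ≤ c) (hT : 0 ≤ T)
    (h : ∀ t ≥ T, ω (a * t) ≤ c * ω t) (n : ℕ) {t : ℝ} (ht : T ≤ t) :
    ω (a ^ n * t) ≤ c ^ n * ω t := by
  induction n generalizing t with
  | zero => simp
  | succ n ih =>
    have hat : T ≤ a * t := ht.trans (le_mul_of_one_le_left (hT.trans ht) ha)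
    calc ω (a ^ (n + 1) * t) = ω (a ^ n * (a * t)) := by ring_nf
      _ ≤ c ^ n * ω (a * t) := ih hat
      _ ≤ c ^ n * (c * ω t) := mul_le_mul_of_nonneg_left (h t ht) (by positivity)
      _ = c ^ (n + 1) * ω t := by ring

lemma omega1_of_eventually_le_mul {ω : ℝ → ℝ} (hmono : MonotoneOn ω (Ici 0)) (h0 : 0 ≤ ω 0)
    {a c : ℝ} (ha : 1 < a) (h : ∀ᶠ t in atTop, ω (a * t) ≤ c * ω t) : Omega1 ω := by
  have hnonneg : ∀ t, 0 ≤ t → 0 ≤ ω t := fun t ht => h0.trans (hmono self_mem_Ici ht ht)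
  obtain ⟨T₀, hT₀⟩ := eventually_atTop.mp h
  set T := max T₀ 0
  -- `c` may be negative; `max c 0` is still a valid factor since `ω ≥ 0`.
  have hstep : ∀ t ≥ T, ω (a * t) ≤ max c 0 * ω t := fun t ht =>
    (hT₀ t (le_of_max_le_left ht)).trans <|
      mul_le_mul_of_nonneg_right (le_max_left c 0) (hnonneg t (le_of_max_le_right ht))
  obtain ⟨n, hn⟩ : ∃ n : ℕ, 2 < a ^ n := pow_unbounded_of_one_lt 2 ha
  have hω2T : 0 ≤ ω (2 * T) := hnonneg _ (by positivity)
  set L := max (max c 0 ^ n) (ω (2 * T) + 1)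
  refine ⟨L, le_max_of_le_right (by linarith), fun t ht => ?_⟩
  have hωt := hnonneg t ht
  have hL : 0 ≤ L := le_max_of_le_right (by linarith)
  suffices ω (2 * t) ≤ L * ω t + L by linarith
  rcases le_or_gt T t with hTt | htT
  · have h2t : 2 * t ≤ a ^ n * t := by nlinarith
    calc ω (2 * t) ≤ ω (a ^ n * t) :=
          hmono (mem_Ici.2 (by positivity)) (mem_Ici.2 (by positivity)) h2t
      _ ≤ max c 0 ^ n * ω t :=
          le_pow_mul_of_le_mul_s16 ha.le (le_max_right _ _) (le_max_right _ _) hstep n hTt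
      _ ≤ L * ω t := mul_le_mul_of_nonneg_right (le_max_left _ _) hωt
      _ ≤ L * ω t + L := le_add_of_nonneg_right hL
  · calc ω (2 * t) ≤ ω (2 * T) := hmono (mem_Ici.2 (by positivity)) (mem_Ici.2 (by positivity))
          (by linarith)
      _ ≤ L := by linarith [le_max_right (max c 0 ^ n) (ω (2 * T) + 1)]
      _ ≤ L * ω t + L := le_add_of_nonneg_left (mul_nonneg hL hωt)

lemma Omega1.eventually_le_mul {ω : ℝ → ℝ} (hω : Tendsto ω atTop atTop) (h : Omega1 ω) :
    ∃ L : ℝ, 1 ≤ L ∧ ∀ᶠ t in atTop, ω (2 * t) ≤ (L + 1) * ω t := by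
  obtain ⟨L, hL, hbound⟩ := h
  refine ⟨L, hL, ?_⟩
  filter_upwards [eventually_ge_atTop 0, hω.eventually_ge_atTop L] with t ht hLt
  nlinarith [hbound t ht]

lemma Omega1.exists_pcond {ω : ℝ → ℝ} (hω : Tendsto ω atTop atTop) (h : Omega1 ω) :
    ∃ γ : ℝ, 0 < γ ∧ Pcond ω γ := by
  obtain ⟨L, hL, hdouble⟩ := h.eventually_le_mul hω
  have hK : 1 < L + 2 := by linarith
  refine ⟨Real.logb (L + 2) 2, Real.logb_pos hK one_lt_two,
    (pcond_iff_eventually_le_mul (hω.eventually_gt_atTop 0)).mpr ⟨L + 2, hK, L + 1, by linarith, ?_⟩⟩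
  rwa [Real.rpow_logb (by linarith) hK.ne' two_pos]

lemma IsWeightFunction.omega1_of_pcond {ω : ℝ → ℝ} (hω : IsWeightFunction ω) {γ : ℝ}
    (hγ : 0 < γ) (h : Pcond ω γ) : Omega1 ω := by
  obtain ⟨K, hK, c, -, hc⟩ :=
    (pcond_iff_eventually_le_mul (hω.tendsto_atTop.eventually_gt_atTop 0)).mp h
  exact omega1_of_eventually_le_mul hω.monotoneOn hω.map_zero.ge
    (Real.one_lt_rpow (by linarith) hγ) hc

/-- a weight function satisfies `(ω₁)` iff `γ(ω) > 0`,
i.e. iff `(P_{ω,γ})` holds for some `γ > 0`. -/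
theorem omega1_iff_gammaIndex_pos
    (ω : ℝ → ℝ) (hω : IsWeightFunction ω) :
    (Omega1 ω ↔ 0 < gammaIndex ω) ∧
    (Omega1 ω ↔ ∃ γ : ℝ, 0 < γ ∧ Pcond ω γ) := by
  have key : Omega1 ω ↔ ∃ γ : ℝ, 0 < γ ∧ Pcond ω γ :=
    ⟨Omega1.exists_pcond hω.tendsto_atTop, fun ⟨_, hγ, hP⟩ => hω.omega1_of_pcond hγ hP⟩
  exact ⟨key.trans gammaIndex_pos_iff.symm, key⟩
end
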